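/- Let E be a finite simple ring (with 1, not the zero ring). Then there exist a natural number l ≥ 1 and a finite field F such that E is isomorphic as a ring to the algebra of l × l matrices over F. -/

import Mathlib

/-!
By Wedderburn–Artin, a simple Artinian ring — in particular a finite simple ring — is a matrix
ring `Mₙ(D)` with `n ≥ 1` over the division ring `D = End(I)ᵐᵒᵖ` of a minimal left ideal `I`.
When the ring is finite, so is `D`, and Wedderburn's little theorem makes `D` a field.
-/

universe u

theorem IsSimpleRing.exists_ringEquiv_matrix_finite_divisionRing (R : Type u) [Ring R] [Finite R]
    [IsSimpleRing R] :
    ∃ (n : ℕ) (_ : NeZero n) (D : Type u) (_ : DivisionRing D) (_ : Finite D),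
      Nonempty (R ≃+* Matrix (Fin n) (Fin n) D) := by
  obtain ⟨n, hn, I, _, ⟨e⟩⟩ := IsSimpleRing.exists_ringEquiv_matrix_end_mulOpposite R
  have : Finite (Module.End R I) := .of_injective _ DFunLike.coe_injective
  classical exact ⟨n, hn, _, _, .of_equiv _ MulOpposite.opEquiv, ⟨e⟩⟩

theorem Finite.exists_ringEquiv_field_type (K : Type u) [Field K] [Finite K] :
    ∃ (F : Type) (_ : Field F) (_ : Finite F), Nonempty (K ≃+* F) :=
  ⟨Shrink.{0} K, inferInstance, .of_equiv _ (equivShrink.{0} K), ⟨(Shrink.ringEquiv.{0} K).symm⟩⟩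

/-- Wedderburn: a finite simple ring is isomorphic to a matrix algebra `Mat_{l×l}(F)`,
`l ≥ 1`, over a finite field `F`. -/
theorem finite_simple_ring_is_matrix_ring (E : Type*) [Ring E] [Finite E]
    [IsSimpleRing E] :
    ∃ (l : ℕ) (F : Type) (_ : Field F) (_ : Finite F),
      1 ≤ l ∧ Nonempty (E ≃+* Matrix (Fin l) (Fin l) F) := by
  obtain ⟨l, hl, D, _, _, ⟨e⟩⟩ := IsSimpleRing.exists_ringEquiv_matrix_finite_divisionRing E
  let : Field D := littleWedderburn D
  obtain ⟨F, _, _, ⟨f⟩⟩ := Finite.exists_ringEquiv_field_type D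
  exact ⟨l, F, _, ‹_›, Nat.one_le_iff_ne_zero.mpr hl.ne, ⟨e.trans f.mapMatrix⟩⟩
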